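/- arXiv:1103.2349 — 2 statements merged into one kernel-verified Lean document; each statement's English description precedes it below -/
import Mathlib

section
/- The operator T : c₀ ⇉ ℓ¹ with graph {(−G(y), y) : y ∈ ℓ¹, ∑_i y_i = 0} is maximal monotone: if x ∈ c₀, y ∈ ℓ¹ satisfy ⟨x − x', y − y'⟩ ≥ 0 for all (x', y') in the graph of T, then x = −G(y) and ∑_i y_i = 0. -/
open Filter Topology

/-!
Put `u = x + G y` and `S = ∑ y`. Testing monotonicity against `y' = y - a eⱼ - b eₖ` with
`j < k` and `a + b = S` (so that `∑ y' = 0`) gives `0 ≤ a uⱼ + b uₖ`, because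
`G (a eⱼ + b eₖ)` equals `b` at `j` and `-a` at `k`. Letting the split `a + b = S` vary forces
`u` to be constant; since `x → 0` and `G y → -S`, that constant is `-S`, and the split
`a = S`, `b = 0` then gives `-S² ≥ 0`.
-/

/-- The Gossez operator, with sequences indexed from `0`:
entry `n` (paper index `n+1`) is `∑_{i ≥ n+1} y i − ∑_{i ≤ n-1} y i`. -/
noncomputable def G (y : ℕ → ℝ) (n : ℕ) : ℝ :=
  (∑' i : ℕ, y (n + 1 + i)) - ∑ i ∈ Finset.range n, y i

lemma Summable.comp_add_left_succ {E : Type*} [AddCommGroup E] [TopologicalSpace E]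
    [IsTopologicalAddGroup E] {f : ℕ → E} (hf : Summable f) (n : ℕ) :
    Summable fun i => f (n + 1 + i) := by
  simpa only [add_comm] using (summable_nat_add_iff (n + 1)).mpr hf

lemma G_sub {y w : ℕ → ℝ} (hy : Summable y) (hw : Summable w) : G (y - w) = G y - G w := by
  ext n
  simp only [G, Pi.sub_apply, Finset.sum_sub_distrib,
    (hy.comp_add_left_succ n).tsum_sub (hw.comp_add_left_succ n)]
  ring

lemma G_single (j : ℕ) (a : ℝ) (n : ℕ) :
    G (Pi.single j a) n = (if n < j then a else 0) - if j < n then a else 0 := by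
  have htail : ∑' i, (Pi.single j a : ℕ → ℝ) (n + 1 + i) = if n < j then a else 0 := by
    split_ifs with hnj
    · rw [tsum_eq_single (j - (n + 1)) fun i hi => by rw [Pi.single_eq_of_ne (by omega)]]
      simp [show n + 1 + (j - (n + 1)) = j by omega]
    · simp [show ∀ i, n + 1 + i ≠ j by omega]
  simp only [G, htail, Finset.sum_pi_single', Finset.mem_range]

lemma tendsto_G {y : ℕ → ℝ} (hy : Summable y) : Tendsto (G y) atTop (𝓝 (-∑' i, y i)) := by
  have htail : Tendsto (fun n => ∑' i, y (n + 1 + i)) atTop (𝓝 0) := by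
    refine ((tendsto_sum_nat_add y).comp (tendsto_add_atTop_nat 1)).congr fun n => ?_
    exact tsum_congr fun i => by ring_nf
  have := htail.sub hy.hasSum.tendsto_sum_nat
  rwa [zero_sub] at this

lemma two_point_nonneg_of_monotone {x y : ℕ → ℝ} (hy : Summable y)
    (h : ∀ y' : ℕ → ℝ, Summable (fun i => |y' i|) → (∑' i, y' i) = 0 →
      ∑' n, (x n - (-G y' n)) * (y n - y' n) ≥ 0)
    {j k : ℕ} (hjk : j < k) {a b : ℝ} (hab : a + b = ∑' i, y i) :
    0 ≤ (x j + G y j) * a + (x k + G y k) * b := by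
  have hsj : Summable (Pi.single j a : ℕ → ℝ) := (hasSum_pi_single j a).summable
  have hsk : Summable (Pi.single k b : ℕ → ℝ) := (hasSum_pi_single k b).summable
  have hsj' : Summable (y - Pi.single j a) := hy.sub hsj
  set y' := y - Pi.single j a - Pi.single k b
  have hy'_hasSum : HasSum y' (∑' i, y i - a - b) :=
    (hy.hasSum.sub (hasSum_pi_single j a)).sub (hasSum_pi_single k b)
  have hy'_sum : ∑' i, y' i = 0 := by
    rw [hy'_hasSum.tsum_eq]
    linarith
  have hG : G y' = G y - G (Pi.single j a) - G (Pi.single k b) := by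
    rw [G_sub hsj' hsk, G_sub hy hsj]
  have hpair := h y' hy'_hasSum.summable.abs hy'_sum
  rw [tsum_eq_sum (s := {j, k}) fun n hn => ?_, Finset.sum_pair hjk.ne] at hpair
  · simp [y', hG, G_single, hjk, hjk.ne, hjk.ne', hjk.not_gt] at hpair
    linarith
  · simp only [Finset.mem_insert, Finset.mem_singleton, not_or] at hn
    simp [y', hn.1, hn.2]

lemma eq_zero_of_forall_nonneg_add_mul {c d : ℝ} (h : ∀ t : ℝ, 0 ≤ c + t * d) : d = 0 := by
  by_contra hd
  have := h ((-c - 1) / d)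
  rw [div_mul_cancel₀ _ hd] at this
  linarith

lemma eq_neg_of_forall_two_point_nonneg {u : ℕ → ℝ} {S : ℝ} (hlim : Tendsto u atTop (𝓝 (-S)))
    (h : ∀ n, 0 < n → ∀ t : ℝ, 0 ≤ u 0 * (S - t) + u n * t) : (∀ n, u n = -S) ∧ S = 0 := by
  have hconst : ∀ n, u n = u 0 := by
    intro n
    rcases n.eq_zero_or_pos with rfl | hn
    · rfl
    · have := eq_zero_of_forall_nonneg_add_mul (c := u 0 * S) (d := u n - u 0) fun t => by
        linarith [h n hn t]
      linarith
  have hu0 : u 0 = -S := tendsto_nhds_unique (tendsto_const_nhds.congr fun n => (hconst n).symm) hlim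
  have hS : S = 0 := by nlinarith [h 1 one_pos 0]
  exact ⟨fun n => by rw [hconst, hu0], hS⟩

/-- The operator with graph `{(-G y', y') : y' ∈ l1, ∑ i, y' i = 0}` is maximal monotone
in `c₀ × l1`. -/
theorem T_maximal_monotone (x y : ℕ → ℝ)
    (hx : Tendsto x atTop (𝓝 0)) (hy : Summable fun i => |y i|)
    (h : ∀ y' : ℕ → ℝ, Summable (fun i => |y' i|) → (∑' i, y' i) = 0 →
      ∑' n, (x n - (-G y' n)) * (y n - y' n) ≥ 0) :
    (∀ n, x n = -G y n) ∧ (∑' i, y i) = 0 := by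
  have hy' : Summable y := hy.of_abs
  obtain ⟨hu, hS⟩ := eq_neg_of_forall_two_point_nonneg (u := fun n => x n + G y n)
    (by simpa using hx.add (tendsto_G hy'))
    fun n hn t => two_point_nonneg_of_monotone hy' h hn (by ring)
  exact ⟨fun n => by linarith [hu n], hS⟩
end

section
/- With x^τ = −G(τỹ) + (1/τ)e for ỹ ∈ ℓ¹ satisfying ∑_i ỹ_i > 0, the pairs (x^τ, τỹ) are pairwise non-monotonically related: for 0 < τ ≠ τ' < ∞, ⟨x^τ − x^{τ'}, τỹ − τ'ỹ⟩ = (τ − τ')(1/τ − 1/τ') ∑_i ỹ_i < 0. -/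
open Filter Topology

/-!
For `y ∈ ℓ¹` with partial sums `S N` and total `T`, the terms telescope:
`G y n * y n = T (S (n+1) - S n) - (S (n+1)² - S n²)`, so `∑_{n<N} G y n * y n = S N (T - S N) → 0`.
Hence `⟪G y, y⟫ = 0`, and since `G` is linear the pairing of `x^τ - x^τ'` with `(τ - τ') ỹ`
reduces to the contribution `(τ - τ') (1/τ - 1/τ') ∑ ỹ` of the constant sequences.
-/

section Gossez

variable {y : ℕ → ℝ}

lemma G_const_mul (c : ℝ) (n : ℕ) :
    G (fun i => c * y i) n = c * G y n := by
  simp only [G, tsum_mul_left, ← Finset.mul_sum]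
  ring

lemma G_eq_tsum_sub (hy : Summable y) (n : ℕ) :
    G y n = (∑' i, y i) - ∑ i ∈ Finset.range (n + 1), y i - ∑ i ∈ Finset.range n, y i := by
  rw [G, ← hy.sum_add_tsum_nat_add (n + 1)]
  simp only [add_comm _ (n + 1)]
  ring

lemma abs_G_le (hy : Summable y) (n : ℕ) : |G y n| ≤ 2 * ∑' i, |y i| := by
  have habs : Summable fun i => |y i| := summable_abs_iff.mpr hy
  have htail : |∑' i, y (n + 1 + i)| ≤ ∑' i, |y i| :=
    calc |∑' i, y (n + 1 + i)| ≤ ∑' i, |y (n + 1 + i)| :=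
          norm_tsum_le_tsum_norm (f := fun i => y (n + 1 + i))
            (habs.comp_injective (add_right_injective (n + 1)))
      _ ≤ ∑' i, |y i| :=
          tsum_comp_le_tsum_of_inj habs (fun _ => abs_nonneg _) (add_right_injective (n + 1))
  have hhead : |∑ i ∈ Finset.range n, y i| ≤ ∑' i, |y i| :=
    (Finset.abs_sum_le_sum_abs _ _).trans (habs.sum_le_tsum _ fun i _ => abs_nonneg _)
  calc |G y n| ≤ |∑' i, y (n + 1 + i)| + |∑ i ∈ Finset.range n, y i| := abs_sub _ _
    _ ≤ 2 * ∑' i, |y i| := by linarith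

lemma summable_G_mul (hy : Summable y) : Summable fun n => G y n * y n := by
  refine Summable.of_norm_bounded ((summable_abs_iff.mpr hy).mul_left (2 * ∑' i, |y i|)) ?_
  intro n
  rw [Real.norm_eq_abs, abs_mul]
  exact mul_le_mul_of_nonneg_right (abs_G_le hy n) (abs_nonneg _)

lemma sum_range_G_mul (hy : Summable y) (N : ℕ) :
    ∑ n ∈ Finset.range N, G y n * y n =
      (∑ i ∈ Finset.range N, y i) * ((∑' i, y i) - ∑ i ∈ Finset.range N, y i) := by
  induction N with
  | zero => simp
  | succ N ih =>
      rw [Finset.sum_range_succ, ih, G_eq_tsum_sub hy N, Finset.sum_range_succ (f := y) (n := N)]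
      ring

lemma tsum_G_mul_self_eq_zero (hy : Summable y) : ∑' n, G y n * y n = 0 := by
  have hpartial : Tendsto (fun N => ∑ i ∈ Finset.range N, y i) atTop (𝓝 (∑' i, y i)) :=
    hy.hasSum.tendsto_sum_nat
  have hlim := hpartial.mul ((tendsto_const_nhds (x := ∑' i, y i)).sub hpartial)
  rw [sub_self, mul_zero] at hlim
  simp only [← sum_range_G_mul hy] at hlim
  exact tendsto_nhds_unique (summable_G_mul hy).hasSum.tendsto_sum_nat hlim

end Gossez

lemma sub_mul_one_div_sub_neg {a b : ℝ} (ha : 0 < a) (hb : 0 < b) (hab : a ≠ b) :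
    (a - b) * (1 / a - 1 / b) < 0 := by
  have hsq : 0 < (a - b) ^ 2 := by positivity [sub_ne_zero.mpr hab]
  have h : (a - b) * (1 / a - 1 / b) = -((a - b) ^ 2 / (a * b)) := by
    field_simp
    ring
  rw [h, neg_lt_zero]
  positivity

/-- The pairs `(x^τ, τ • ytil)` are pairwise non-monotonically related: for
`0 < τ ≠ τ' `, `⟪x^τ - x^τ', τ ytil - τ' ytil⟫ = (τ-τ')(1/τ-1/τ') ∑ i, ytil i < 0`. -/
theorem extension_points_not_monotone (ytil : ℕ → ℝ) (τ τ' : ℝ)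
    (hytil : Summable fun i => |ytil i|) (hpos : 0 < ∑' i, ytil i)
    (hτ : 0 < τ) (hτ' : 0 < τ') (hne : τ ≠ τ') :
    (∑' n, (((-G (fun i => τ * ytil i) n + 1 / τ)
          - (-G (fun i => τ' * ytil i) n + 1 / τ')) * (τ * ytil n - τ' * ytil n))
        = (τ - τ') * (1 / τ - 1 / τ') * ∑' i, ytil i) ∧
    (τ - τ') * (1 / τ - 1 / τ') * (∑' i, ytil i) < 0 := by
  have hy : Summable ytil := summable_abs_iff.mp hytil
  have hG : HasSum (fun n => G ytil n * ytil n) 0 :=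
    tsum_G_mul_self_eq_zero hy ▸ (summable_G_mul hy).hasSum
  have hsum := (hG.mul_left (-(τ - τ') ^ 2)).add
    (hy.hasSum.mul_left ((τ - τ') * (1 / τ - 1 / τ')))
  refine ⟨?_, mul_neg_of_neg_of_pos (sub_mul_one_div_sub_neg hτ hτ' hne) hpos⟩
  convert hsum.tsum_eq using 1
  · congr 1
    funext n
    rw [G_const_mul, G_const_mul]
    ring
  · ring
end
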